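/- arXiv:1509.03985 — 3 statements merged into one kernel-verified Lean document; each statement's English description precedes it below -/
import Mathlib

section
/- Key lemma for Theorem 2 (service reachability with charging): Let (x, q) be a feasible augmented state with Σ_{i,j} d(i,j) ≥ 1, suppose V is nonempty and α_d·tmax ≤ 1. Then there exists a feasible trajectory of the undisturbed augmented system from (x, q) over L = 2·tmax + 2·⌈(α_d/α_c)·tmax⌉ steps along which at least one waiting customer is picked up, i.e., v(τ)(k,i,j) = 1 for some step τ < L, some vehicle k ∈ V, and some stations i, j ∈ N (in the worst case the vehicle must complete its current trip, charge for ⌈(α_d/α_c)·tmax⌉ steps, rebalance, and charge again before departing with a customer). -/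
/-! ## AMoD model (Zhang, Rossi, Pavone) -/

/-- A state of the AMoD system: waiting customers `d`, travel indicators `p`,
waiting-vehicle indicators `u`. -/
structure AMoDState (N V : Type) where
  d : N → N → ℤ
  p : V → N → ℕ → ℤ
  u : V → N → ℤ

/-- A control of the AMoD system: customer-carrying trips `v`, rebalancing trips `w`. -/
structure AMoDControl (N V : Type) where
  v : V → N → N → ℤ
  w : V → N → N → ℤ

variable {N V : Type} [Fintype N] [DecidableEq N] [Fintype V]

/-- `Tmax i = (max_{j ≠ i} t j i) - 1`. -/
def Tmax (t : N → N → ℕ) (i : N) : ℕ :=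
  ((Finset.univ : Finset N).erase i).sup (fun j => t j i) - 1

/-- `tmax = max_{i ≠ j} t i j`. -/
def tmax (t : N → N → ℕ) : ℕ :=
  ((Finset.univ : Finset N).offDiag).sup (fun p => t p.1 p.2)

/-- `Σ_{i ∈ N} Σ_{T = 0}^{Tmax i} p k i T`. -/
def pSum (t : N → N → ℕ) (x : AMoDState N V) (k : V) : ℤ :=
  ∑ i : N, ∑ T ∈ Finset.range (Tmax t i + 1), x.p k i T

/-- Validity of a state: `d` nonnegative and zero on the diagonal,
`p` and `u` binary (and `p` vanishing out of range). -/
structure IsState (t : N → N → ℕ) (x : AMoDState N V) : Prop where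
  d_nonneg : ∀ i j, 0 ≤ x.d i j
  d_diag : ∀ i, x.d i i = 0
  p_bin : ∀ k i T, T ≤ Tmax t i → x.p k i T = 0 ∨ x.p k i T = 1
  p_oob : ∀ k i T, Tmax t i < T → x.p k i T = 0
  u_bin : ∀ k i, x.u k i = 0 ∨ x.u k i = 1

/-- Feasibility of a state: validity, constraint (P), and constraint (UP). -/
structure FeasState (t : N → N → ℕ) (x : AMoDState N V) : Prop where
  isState : IsState t x
  constrP : ∀ k, pSum t x k ≤ 1
  constrUP : ∀ k, (∑ i : N, x.u k i) + pSum t x k = 1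

/-- Validity of a control: binary values, zero diagonal. -/
structure IsControl (uc : AMoDControl N V) : Prop where
  v_bin : ∀ k i j, uc.v k i j = 0 ∨ uc.v k i j = 1
  w_bin : ∀ k i j, uc.w k i j = 0 ∨ uc.w k i j = 1
  v_diag : ∀ k i, uc.v k i i = 0
  w_diag : ∀ k i, uc.w k i i = 0

/-- Arrivals: nonnegative integers, zero on the diagonal. -/
def IsArrivals (c : N → N → ℤ) : Prop :=
  (∀ i j, 0 ≤ c i j) ∧ (∀ i, c i i = 0)

/-- Feasibility of a control at `(x, c)`: validity together with
constraints (A) and (B). -/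
structure FeasControl (t : N → N → ℕ) (x : AMoDState N V) (c : N → N → ℤ)
    (uc : AMoDControl N V) : Prop where
  isControl : IsControl uc
  constrA : ∀ k i, (∑ j : N, (uc.v k i j + uc.w k i j)) ≤ x.u k i + x.p k i 0
  constrB : ∀ i j, (∑ k : V, uc.v k i j) ≤ x.d i j + c i j

/-- The successor state `x⁺` of `x` under control `(v, w)` with arrivals `c`. -/
def succState (t : N → N → ℕ) (x : AMoDState N V) (c : N → N → ℤ)
    (uc : AMoDControl N V) : AMoDState N V where
  d := fun i j => x.d i j + c i j - ∑ k : V, uc.v k i j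
  p := fun k i T =>
    if T < Tmax t i then
      x.p k i (T + 1) +
        ∑ j ∈ Finset.univ.filter (fun j => t j i = T + 1), (uc.v k j i + uc.w k j i)
    else if T = Tmax t i then
      ∑ j ∈ Finset.univ.filter (fun j => t j i = Tmax t i + 1), (uc.v k j i + uc.w k j i)
    else 0
  u := fun k i => x.u k i + x.p k i 0 - ∑ j : N, (uc.v k i j + uc.w k i j)

/-- A feasible trajectory of the undisturbed system (`c ≡ 0`) from `x` over `n` steps. -/
def FeasTraj (t : N → N → ℕ) (x : AMoDState N V) (n : ℕ)
    (xs : ℕ → AMoDState N V) (cs : ℕ → AMoDControl N V) : Prop :=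
  xs 0 = x ∧ ∀ τ < n, FeasControl t (xs τ) (fun _ _ => 0) (cs τ) ∧
    xs (τ + 1) = succState t (xs τ) (fun _ _ => 0) (cs τ)

/-- The primary cost: total number of waiting customers. -/
def Jx (x : AMoDState N V) : ℤ := ∑ i : N, ∑ j : N, x.d i j

/-- The secondary cost: total rebalancing travel time. -/
def Ju (t : N → N → ℕ) (uc : AMoDControl N V) : ℤ :=
  ∑ k : V, ∑ i : N, ∑ j : N, (t i j : ℤ) * uc.w k i j

/-- The MPC cost of a plan over the horizon `thor`. -/
def planCost (t : N → N → ℕ) (ρ1 : ℝ) (thor : ℕ)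
    (xs : ℕ → AMoDState N V) (cs : ℕ → AMoDControl N V) : ℝ :=
  ∑ τ ∈ Finset.range thor, ((Jx (xs (τ + 1)) : ℝ) + ρ1 * (Ju t (cs τ) : ℝ))

/-- An MPC-optimal plan at a feasible state `x`. -/
def MPCOptimal (t : N → N → ℕ) (ρ1 : ℝ) (thor : ℕ) (x : AMoDState N V)
    (xs : ℕ → AMoDState N V) (cs : ℕ → AMoDControl N V) : Prop :=
  FeasTraj t x thor xs cs ∧
    ∀ ys ds, FeasTraj t x thor ys ds →
      planCost t ρ1 thor xs cs ≤ planCost t ρ1 thor ys ds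

/-- An (infinite) MPC trajectory of the undisturbed system: a feasible trajectory in
which every applied control is the first control of some MPC-optimal plan. -/
def MPCTraj (t : N → N → ℕ) (ρ1 : ℝ) (thor : ℕ)
    (xs : ℕ → AMoDState N V) (cs : ℕ → AMoDControl N V) : Prop :=
  (∀ τ, FeasControl t (xs τ) (fun _ _ => 0) (cs τ) ∧
      xs (τ + 1) = succState t (xs τ) (fun _ _ => 0) (cs τ)) ∧
  (∀ τ, ∃ ys ds, MPCOptimal t ρ1 thor (xs τ) ys ds ∧ ds 0 = cs τ)

/-! ## Charging model -/

/-- An augmented state: a state together with the state of charge of each vehicle. -/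
structure AugState (N V : Type) where
  x : AMoDState N V
  q : V → ℝ

variable {N V : Type} [Fintype N] [DecidableEq N] [Fintype V]

/-- Feasibility of an augmented state. -/
structure FeasAugState (t : N → N → ℕ) (αd : ℝ) (s : AugState N V) : Prop where
  feasState : FeasState t s.x
  q_nonneg : ∀ k, 0 ≤ s.q k
  q_le_one : ∀ k, s.q k ≤ 1
  q_range : ∀ k i T, s.x.p k i T = 1 → αd * (T : ℝ) ≤ s.q k

/-- The augmented successor of `(x, q)` under `(v, w)` with arrivals `c`. -/
def augSucc (t : N → N → ℕ) (αc αd : ℝ) (s : AugState N V) (c : N → N → ℤ)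
    (uc : AMoDControl N V) : AugState N V :=
  let x' := succState t s.x c uc
  { x := x'
    q := fun k =>
      min (s.q k + αc * ∑ i : N, ((x'.u k i : ℤ) : ℝ)) 1 -
        αd * ∑ i : N, ∑ T ∈ Finset.range (Tmax t i + 1), ((x'.p k i T : ℤ) : ℝ) }

/-- Feasibility of a control at an augmented state: feasibility at `(x, c)` plus the
charge constraints for departing trips. -/
structure FeasAugControl (t : N → N → ℕ) (αd : ℝ) (s : AugState N V) (c : N → N → ℤ)
    (uc : AMoDControl N V) : Prop where
  feasControl : FeasControl t s.x c uc
  charge_v : ∀ k i j, uc.v k i j = 1 → αd * (t i j : ℝ) ≤ s.q k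
  charge_w : ∀ k i j, uc.w k i j = 1 → αd * (t i j : ℝ) ≤ s.q k

/-- A feasible trajectory of the undisturbed augmented system from `s` over `n` steps. -/
def FeasAugTraj (t : N → N → ℕ) (αc αd : ℝ) (s : AugState N V) (n : ℕ)
    (ss : ℕ → AugState N V) (cs : ℕ → AMoDControl N V) : Prop :=
  ss 0 = s ∧ ∀ τ < n, FeasAugControl t αd (ss τ) (fun _ _ => 0) (cs τ) ∧
    ss (τ + 1) = augSucc t αc αd (ss τ) (fun _ _ => 0) (cs τ)

/-- The MPC cost of a plan with charging over the horizon `thor`. -/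
def augPlanCost (t : N → N → ℕ) (ρ1 ρ2 ρc : ℝ) (thor : ℕ)
    (ss : ℕ → AugState N V) (cs : ℕ → AMoDControl N V) : ℝ :=
  (∑ τ ∈ Finset.range thor,
      ((Jx (ss (τ + 1)).x : ℝ) + ρ1 * (Ju t (cs τ) : ℝ) - ρ2 * ∑ k : V, (ss (τ + 1)).q k)) -
    ρc * ∑ k : V, (ss thor).q k

/-- An MPC-optimal plan at a feasible augmented state `s`. -/
def AugMPCOptimal (t : N → N → ℕ) (αc αd ρ1 ρ2 ρc : ℝ) (thor : ℕ) (s : AugState N V)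
    (ss : ℕ → AugState N V) (cs : ℕ → AMoDControl N V) : Prop :=
  FeasAugTraj t αc αd s thor ss cs ∧
    ∀ ys ds, FeasAugTraj t αc αd s thor ys ds →
      augPlanCost t ρ1 ρ2 ρc thor ss cs ≤ augPlanCost t ρ1 ρ2 ρc thor ys ds

/-- An (infinite) MPC trajectory of the undisturbed augmented system. -/
def AugMPCTraj (t : N → N → ℕ) (αc αd ρ1 ρ2 ρc : ℝ) (thor : ℕ)
    (ss : ℕ → AugState N V) (cs : ℕ → AMoDControl N V) : Prop :=
  (∀ τ, FeasAugControl t αd (ss τ) (fun _ _ => 0) (cs τ) ∧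
      ss (τ + 1) = augSucc t αc αd (ss τ) (fun _ _ => 0) (cs τ)) ∧
  (∀ τ, ∃ ys ds, AugMPCOptimal t αc αd ρ1 ρ2 ρc thor (ss τ) ys ds ∧ ds 0 = cs τ)


/-! ## Auxiliary constructions for the proof -/

section ServiceAux

set_option linter.unusedSectionVars false

variable {N V : Type} [Fintype N] [DecidableEq N] [Fintype V]

open Classical in
/-- Indicator control entry: vehicle `k0` goes from `i0` to `i1`. -/
noncomputable def trip (k0 : V) (i0 i1 : N) : V → N → N → ℤ :=
  fun k a b => if k = k0 then (if a = i0 then (if b = i1 then (1:ℤ) else 0) else 0) else 0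

/-- The zero control. -/
def zC : AMoDControl N V := ⟨fun _ _ _ => 0, fun _ _ _ => 0⟩

/-- Pickup control. -/
noncomputable def vC (k0 : V) (i0 i1 : N) : AMoDControl N V :=
  ⟨trip k0 i0 i1, fun _ _ _ => 0⟩

/-- Rebalancing control. -/
noncomputable def wC (k0 : V) (i0 i1 : N) : AMoDControl N V :=
  ⟨fun _ _ _ => 0, trip k0 i0 i1⟩

/-- Iterated trajectory. -/
noncomputable def traj (t : N → N → ℕ) (αc αd : ℝ) (s : AugState N V)
    (cs : ℕ → AMoDControl N V) : ℕ → AugState N V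
  | 0 => s
  | n + 1 => augSucc t αc αd (traj t αc αd s cs n) (fun _ _ => 0) (cs n)

lemma trip_nonneg (k0 : V) (i0 i1 : N) (k : V) (a b : N) :
    0 ≤ trip k0 i0 i1 k a b := by
  unfold trip; split <;> try norm_num
  split <;> try norm_num
  split <;> norm_num

lemma trip_bin (k0 : V) (i0 i1 : N) (k : V) (a b : N) :
    trip k0 i0 i1 k a b = 0 ∨ trip k0 i0 i1 k a b = 1 := by
  unfold trip; split
  · split
    · split
      · right; rfl
      · left; rfl
    · left; rfl
  · left; rfl

lemma trip_eq_one (k0 : V) (i0 i1 : N) {k : V} {a b : N}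
    (h : trip k0 i0 i1 k a b = 1) : k = k0 ∧ a = i0 ∧ b = i1 := by
  unfold trip at h
  split at h
  · split at h
    · split at h
      · exact ⟨by assumption, by assumption, by assumption⟩
      · norm_num at h
    · norm_num at h
  · norm_num at h

lemma trip_self (k0 : V) (i0 i1 : N) : trip k0 i0 i1 k0 i0 i1 = 1 := by
  unfold trip; simp

lemma trip_ne_k {k0 : V} (i0 i1 : N) {k : V} (hk : k ≠ k0) (a b : N) :
    trip k0 i0 i1 k a b = 0 := by
  unfold trip; simp [hk]

lemma trip_ne_a (k0 : V) {i0 : N} (i1 : N) (k : V) {a : N} (ha : a ≠ i0) (b : N) :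
    trip k0 i0 i1 k a b = 0 := by
  unfold trip; simp [ha]

lemma trip_ne_b (k0 : V) (i0 : N) {i1 : N} (k : V) (a : N) {b : N} (hb : b ≠ i1) :
    trip k0 i0 i1 k a b = 0 := by
  unfold trip; simp [hb]

lemma trip_sum_k (k0 : V) (i0 i1 : N) (a b : N) :
    ∑ k : V, trip k0 i0 i1 k a b
      = if a = i0 then (if b = i1 then (1:ℤ) else 0) else 0 := by
  rw [Finset.sum_eq_single_of_mem k0 (Finset.mem_univ _)]
  · unfold trip; simp
  · intro k _ hk; exact trip_ne_k _ _ hk _ _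

open Classical in
lemma trip_sum_row (k0 : V) (i0 i1 : N) (k : V) (a : N) :
    ∑ b : N, trip k0 i0 i1 k a b
      = if k = k0 then (if a = i0 then (1:ℤ) else 0) else 0 := by
  classical
  by_cases hk : k = k0
  · subst hk
    by_cases ha : a = i0
    · subst ha
      rw [Finset.sum_eq_single_of_mem i1 (Finset.mem_univ _)]
      · simp [trip_self]
      · intro b _ hb; exact trip_ne_b _ _ _ _ hb
    · simp only [ha, if_false, if_pos rfl]
      exact Finset.sum_eq_zero fun b _ => trip_ne_a _ _ _ ha _
  · simp [hk, trip_ne_k _ _ hk]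

open Classical in
lemma trip_sum_filter (k0 : V) (i0 i1 : N) (k : V) (a : N) (P : N → Prop)
    [DecidablePred P] :
    ∑ b ∈ Finset.univ.filter P, trip k0 i0 i1 k b a
      = if k = k0 then (if a = i1 then (if P i0 then (1:ℤ) else 0) else 0) else 0 := by
  classical
  rw [Finset.sum_filter, Finset.sum_eq_single_of_mem i0 (Finset.mem_univ _)]
  · by_cases hk : k = k0
    · subst hk
      by_cases ha : a = i1
      · subst ha
        by_cases hP : P i0 <;> simp [hP, trip_self]
      · simp [ha, trip_ne_b k i0 (k := k) i0 (b := a) ha]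
    · simp [hk, trip_ne_k _ _ hk]
  · intro b _ hb
    simp [trip_ne_a k0 i1 k hb a]


/-! ### State component lemmas -/

lemma succState_d (t : N → N → ℕ) (x : AMoDState N V) (uc : AMoDControl N V) (i j : N) :
    (succState t x (fun _ _ => 0) uc).d i j = x.d i j - ∑ k : V, uc.v k i j := by
  simp [succState]

lemma succState_u (t : N → N → ℕ) (x : AMoDState N V) (uc : AMoDControl N V) (k : V) (i : N) :
    (succState t x (fun _ _ => 0) uc).u k i
      = x.u k i + x.p k i 0 - ∑ j : N, (uc.v k i j + uc.w k i j) := rfl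

lemma succState_p_lt (t : N → N → ℕ) (x : AMoDState N V) (uc : AMoDControl N V)
    (k : V) (i : N) (T : ℕ) (h : T < Tmax t i) :
    (succState t x (fun _ _ => 0) uc).p k i T
      = x.p k i (T + 1) +
          ∑ j ∈ Finset.univ.filter (fun j => t j i = T + 1), (uc.v k j i + uc.w k j i) := by
  simp [succState, h]

lemma succState_p_max (t : N → N → ℕ) (x : AMoDState N V) (uc : AMoDControl N V)
    (k : V) (i : N) :
    (succState t x (fun _ _ => 0) uc).p k i (Tmax t i)
      = ∑ j ∈ Finset.univ.filter (fun j => t j i = Tmax t i + 1), (uc.v k j i + uc.w k j i) := by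
  simp [succState]

lemma succState_p_gt (t : N → N → ℕ) (x : AMoDState N V) (uc : AMoDControl N V)
    (k : V) (i : N) (T : ℕ) (h : Tmax t i < T) :
    (succState t x (fun _ _ => 0) uc).p k i T = 0 := by
  have h1 : ¬ (T < Tmax t i) := by omega
  have h2 : ¬ (T = Tmax t i) := by omega
  simp [succState, h1, h2]

/-- Nonnegativity of all state components. -/
structure XNonneg (x : AMoDState N V) : Prop where
  hd : ∀ i j, 0 ≤ x.d i j
  hp : ∀ k i T, 0 ≤ x.p k i T
  hu : ∀ k i, 0 ≤ x.u k i

/-- Vehicle `k0` is waiting at station `i0` (and nowhere else). -/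
structure ConfW (x : AMoDState N V) (k0 : V) (i0 : N) : Prop where
  u1 : x.u k0 i0 = 1
  u0 : ∀ i, i ≠ i0 → x.u k0 i = 0
  p0 : ∀ i T, x.p k0 i T = 0

/-- Vehicle `k0` is travelling, reaching `i0` in `T0` steps. -/
structure ConfT (t : N → N → ℕ) (x : AMoDState N V) (k0 : V) (i0 : N) (T0 : ℕ) : Prop where
  p1 : x.p k0 i0 T0 = 1
  p0 : ∀ i T, ¬(i = i0 ∧ T = T0) → x.p k0 i T = 0
  u0 : ∀ i, x.u k0 i = 0
  hT : T0 ≤ Tmax t i0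

lemma ConfW.sum_u {x : AMoDState N V} {k0 : V} {i0 : N} (h : ConfW x k0 i0) :
    ∑ i : N, x.u k0 i = 1 := by
  rw [← Finset.add_sum_erase _ _ (Finset.mem_univ i0), h.u1,
    Finset.sum_eq_zero fun i hi => h.u0 i (Finset.ne_of_mem_erase hi)]
  norm_num

lemma ConfW.sum_p (t : N → N → ℕ) {x : AMoDState N V} {k0 : V} {i0 : N} (h : ConfW x k0 i0) :
    ∑ i : N, ∑ T ∈ Finset.range (Tmax t i + 1), x.p k0 i T = 0 := by
  exact Finset.sum_eq_zero fun i _ => Finset.sum_eq_zero fun T _ => h.p0 i T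

lemma ConfT.sum_u {t : N → N → ℕ} {x : AMoDState N V} {k0 : V} {i0 : N} {T0 : ℕ}
    (h : ConfT t x k0 i0 T0) : ∑ i : N, x.u k0 i = 0 :=
  Finset.sum_eq_zero fun i _ => h.u0 i

lemma ConfT.sum_p {t : N → N → ℕ} {x : AMoDState N V} {k0 : V} {i0 : N} {T0 : ℕ}
    (h : ConfT t x k0 i0 T0) :
    ∑ i : N, ∑ T ∈ Finset.range (Tmax t i + 1), x.p k0 i T = 1 := by
  rw [← Finset.add_sum_erase _ _ (Finset.mem_univ i0)]
  rw [Finset.sum_eq_zero (fun i hi => Finset.sum_eq_zero fun T _ =>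
    h.p0 i T (by simp [Finset.ne_of_mem_erase hi]))]
  rw [Finset.sum_eq_single_of_mem T0 (Finset.mem_range.mpr (Nat.lt_succ_of_le h.hT))]
  · rw [h.p1]; norm_num
  · intro T _ hT; exact h.p0 i0 T (by simp [hT])


/-! ### Nonnegativity and zero-control lemmas -/

lemma succ_nonneg (t : N → N → ℕ) (x : AMoDState N V) (uc : AMoDControl N V)
    (hx : XNonneg x)
    (hnn : ∀ k a b, 0 ≤ uc.v k a b ∧ 0 ≤ uc.w k a b)
    (hA : ∀ k i, (∑ j : N, (uc.v k i j + uc.w k i j)) ≤ x.u k i + x.p k i 0)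
    (hB : ∀ i j, (∑ k : V, uc.v k i j) ≤ x.d i j) :
    XNonneg (succState t x (fun _ _ => 0) uc) := by
  constructor
  · intro i j; rw [succState_d]; linarith [hB i j]
  · intro k i T
    rcases lt_trichotomy T (Tmax t i) with h | h | h
    · rw [succState_p_lt t x uc k i T h]
      have : (0:ℤ) ≤ ∑ j ∈ Finset.univ.filter (fun j => t j i = T + 1),
          (uc.v k j i + uc.w k j i) :=
        Finset.sum_nonneg fun j _ => by have := hnn k j i; linarith [this.1, this.2]
      linarith [hx.hp k i (T + 1)]
    · subst h
      rw [succState_p_max]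
      exact Finset.sum_nonneg fun j _ => by have := hnn k j (i); linarith [this.1, this.2]
    · rw [succState_p_gt t x uc k i T h]
  · intro k i; rw [succState_u]; linarith [hA k i]

lemma zC_sum_row (k : V) (i : N) :
    (∑ j : N, ((zC : AMoDControl N V).v k i j + (zC : AMoDControl N V).w k i j)) = 0 := by
  simp [zC]

lemma zC_feas (t : N → N → ℕ) (αd : ℝ) (s : AugState N V) (hx : XNonneg s.x) :
    FeasAugControl t αd s (fun _ _ => 0) zC := by
  refine ⟨⟨⟨fun _ _ _ => Or.inl rfl, fun _ _ _ => Or.inl rfl, fun _ _ => rfl, fun _ _ => rfl⟩,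
    ?_, ?_⟩, ?_, ?_⟩
  · intro k i
    rw [zC_sum_row]
    linarith [hx.hu k i, hx.hp k i 0]
  · intro i j
    simp only [zC, Finset.sum_const_zero, add_zero]
    linarith [hx.hd i j]
  · intro k i j h; simp [zC] at h
  · intro k i j h; simp [zC] at h

lemma zC_nonneg_succ (t : N → N → ℕ) (x : AMoDState N V) (hx : XNonneg x) :
    XNonneg (succState t x (fun _ _ => 0) zC) := by
  refine succ_nonneg t x zC hx (fun k a b => ⟨le_refl 0, le_refl 0⟩) ?_ ?_
  · intro k i; rw [zC_sum_row]; linarith [hx.hu k i, hx.hp k i 0]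
  · intro i j; simp only [zC, Finset.sum_const_zero]; exact hx.hd i j

lemma zC_d (t : N → N → ℕ) (x : AMoDState N V) :
    (succState t x (fun _ _ => 0) zC).d = x.d := by
  funext i j
  rw [succState_d]
  simp [zC]

lemma zC_p (t : N → N → ℕ) (x : AMoDState N V) (k : V) (i : N) (T : ℕ) :
    (succState t x (fun _ _ => 0) zC).p k i T
      = if T < Tmax t i then x.p k i (T + 1) else 0 := by
  rcases lt_trichotomy T (Tmax t i) with h | h | h
  · rw [succState_p_lt t x zC k i T h, if_pos h]; simp [zC]
  · subst h; rw [succState_p_max, if_neg (lt_irrefl _)]; simp [zC]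
  · rw [succState_p_gt t x zC k i T h, if_neg (by omega)]

lemma zC_u (t : N → N → ℕ) (x : AMoDState N V) (k : V) (i : N) :
    (succState t x (fun _ _ => 0) zC).u k i = x.u k i + x.p k i 0 := by
  rw [succState_u, zC_sum_row]; ring

/-! ### Configuration transitions under the zero control -/

lemma confW_step (t : N → N → ℕ) (x : AMoDState N V) (k0 : V) (i0 : N)
    (h : ConfW x k0 i0) : ConfW (succState t x (fun _ _ => 0) zC) k0 i0 := by
  constructor
  · rw [zC_u, h.u1, h.p0]; ring
  · intro i hi; rw [zC_u, h.u0 i hi, h.p0]; ring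
  · intro i T; rw [zC_p]; split <;> simp [h.p0]

lemma confT_step (t : N → N → ℕ) (x : AMoDState N V) (k0 : V) (i0 : N) (T0 : ℕ)
    (h : ConfT t x k0 i0 (T0 + 1)) : ConfT t (succState t x (fun _ _ => 0) zC) k0 i0 T0 := by
  have hlt : T0 < Tmax t i0 := by have := h.hT; omega
  constructor
  · rw [zC_p, if_pos hlt]; exact h.p1
  · intro i T hiT
    rw [zC_p]
    split
    · exact h.p0 i (T + 1) (fun hc => hiT ⟨hc.1, by omega⟩)
    · rfl
  · intro i
    rw [zC_u, h.u0 i, h.p0 i 0 (fun hc => Nat.succ_ne_zero _ hc.2.symm)]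
    ring
  · omega

lemma confT0_step (t : N → N → ℕ) (x : AMoDState N V) (k0 : V) (i0 : N)
    (h : ConfT t x k0 i0 0) : ConfW (succState t x (fun _ _ => 0) zC) k0 i0 := by
  constructor
  · rw [zC_u, h.u0, h.p1]; ring
  · intro i hi; rw [zC_u, h.u0, h.p0 i 0 (by simp [hi])]; ring
  · intro i T
    rw [zC_p]
    split
    · exact h.p0 i (T + 1) (fun hc => Nat.succ_ne_zero _ hc.2)
    · rfl

/-! ### Charge computation -/

lemma augSucc_q (t : N → N → ℕ) (αc αd : ℝ) (s : AugState N V) (uc : AMoDControl N V)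
    (k : V) (a b : ℤ)
    (hu : ∑ i : N, (succState t s.x (fun _ _ => 0) uc).u k i = a)
    (hp : ∑ i : N, ∑ T ∈ Finset.range (Tmax t i + 1),
        (succState t s.x (fun _ _ => 0) uc).p k i T = b) :
    (augSucc t αc αd s (fun _ _ => 0) uc).q k
      = min (s.q k + αc * (a : ℝ)) 1 - αd * (b : ℝ) := by
  have h1 : (∑ i : N, (((succState t s.x (fun _ _ => 0) uc).u k i : ℤ) : ℝ)) = ((a : ℤ) : ℝ) := by
    rw [← hu]; push_cast; rfl
  have h2 : (∑ i : N, ∑ T ∈ Finset.range (Tmax t i + 1),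
      (((succState t s.x (fun _ _ => 0) uc).p k i T : ℤ) : ℝ)) = ((b : ℤ) : ℝ) := by
    rw [← hp]; push_cast; rfl
  simp only [augSucc]
  rw [h1, h2]


/-! ### Travel-time bounds -/

lemma t_le_tmax (t : N → N → ℕ) {i j : N} (hij : i ≠ j) : t i j ≤ tmax t := by
  unfold tmax
  exact Finset.le_sup (f := fun p : N × N => t p.1 p.2) (b := (i, j))
    (Finset.mem_offDiag.mpr ⟨Finset.mem_univ _, Finset.mem_univ _, hij⟩)

lemma Tmax_lt_tmax (t : N → N → ℕ) (hcard : 2 ≤ Fintype.card N)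
    (ht : ∀ i j : N, i ≠ j → 1 ≤ t i j) (i : N) : Tmax t i < tmax t := by
  obtain ⟨j, hj⟩ := Fintype.exists_ne_of_one_lt_card (α := N) (by omega) i
  have h1 : 1 ≤ t j i := ht j i hj
  have h2 : t j i ≤ tmax t := t_le_tmax t hj
  have h4 : (Finset.univ.erase i).sup (fun j => t j i) ≤ tmax t := by
    apply Finset.sup_le
    intro b hb
    exact t_le_tmax t (Finset.ne_of_mem_erase hb)
  unfold Tmax
  omega

lemma t_sub_le_Tmax (t : N → N → ℕ) {i0 i1 : N} (h : i0 ≠ i1) :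
    t i0 i1 - 1 ≤ Tmax t i1 := by
  have h1 : t i0 i1 ≤ (Finset.univ.erase i1).sup (fun j => t j i1) :=
    Finset.le_sup (f := fun j => t j i1) (Finset.mem_erase.mpr ⟨h, Finset.mem_univ i0⟩)
  unfold Tmax
  omega

/-! ### Trip-control transitions -/

open Classical in
lemma trip_row_sum (uc : AMoDControl N V) (k0 : V) (i0 i1 : N)
    (hvw : ∀ k a b, uc.v k a b + uc.w k a b = trip k0 i0 i1 k a b) (k : V) (a : N) :
    (∑ j : N, (uc.v k a j + uc.w k a j))
      = if k = k0 then (if a = i0 then (1:ℤ) else 0) else 0 := by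
  rw [← trip_sum_row k0 i0 i1 k a]
  exact Finset.sum_congr rfl fun b _ => hvw k a b

lemma trip_conf (t : N → N → ℕ) (x : AMoDState N V) (uc : AMoDControl N V)
    (k0 : V) (i0 i1 : N)
    (hvw : ∀ k a b, uc.v k a b + uc.w k a b = trip k0 i0 i1 k a b)
    (hW : ConfW x k0 i0) (h1 : 1 ≤ t i0 i1) (hTm : t i0 i1 - 1 ≤ Tmax t i1) :
    ConfT t (succState t x (fun _ _ => 0) uc) k0 i1 (t i0 i1 - 1) := by
  classical
  have hT1 : t i0 i1 - 1 + 1 = t i0 i1 := by omega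
  have hfilter : ∀ (a : N) (T' : ℕ),
      (∑ j ∈ Finset.univ.filter (fun j => t j a = T' + 1), (uc.v k0 j a + uc.w k0 j a))
        = if a = i1 then (if t i0 a = T' + 1 then (1:ℤ) else 0) else 0 := by
    intro a T'
    rw [Finset.sum_congr rfl fun b _ => hvw k0 b a,
      trip_sum_filter k0 i0 i1 k0 a (fun j => t j a = T' + 1), if_pos rfl]
  constructor
  · rcases lt_or_eq_of_le hTm with hlt | heq
    · rw [succState_p_lt t x uc k0 i1 _ hlt, hW.p0, hfilter, if_pos rfl,
        if_pos hT1.symm]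
      norm_num
    · rw [heq, succState_p_max, hfilter i1 (Tmax t i1), if_pos rfl,
        if_pos (by omega : t i0 i1 = Tmax t i1 + 1)]
  · intro a T' haT'
    rcases lt_trichotomy T' (Tmax t a) with hlt | heq | hgt
    · rw [succState_p_lt t x uc k0 a T' hlt, hW.p0, hfilter]
      rcases eq_or_ne a i1 with rfl | ha
      · have hne : T' ≠ t i0 a - 1 := fun hc => haT' ⟨rfl, hc⟩
        rw [if_pos rfl, if_neg (by omega)]
        norm_num
      · rw [if_neg ha]
        norm_num
    · rw [heq, succState_p_max, hfilter]
      rcases eq_or_ne a i1 with rfl | ha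
      · have hne : T' ≠ t i0 a - 1 := fun hc => haT' ⟨rfl, hc⟩
        rw [if_pos rfl, if_neg (by omega)]
      · rw [if_neg ha]
    · exact succState_p_gt t x uc k0 a T' hgt
  · intro a
    rw [succState_u, trip_row_sum uc k0 i0 i1 hvw, hW.p0, if_pos rfl]
    rcases eq_or_ne a i0 with rfl | ha
    · rw [hW.u1, if_pos rfl]; ring
    · rw [hW.u0 a ha, if_neg ha]; ring
  · exact hTm


lemma wC_hvw (k0 : V) (i0 i1 : N) : ∀ k a b,
    (wC k0 i0 i1).v k a b + (wC k0 i0 i1).w k a b = trip k0 i0 i1 k a b :=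
  fun _ _ _ => zero_add _

lemma vC_hvw (k0 : V) (i0 i1 : N) : ∀ k a b,
    (vC k0 i0 i1).v k a b + (vC k0 i0 i1).w k a b = trip k0 i0 i1 k a b :=
  fun _ _ _ => add_zero _

lemma trip_diag (k0 : V) {i0 i1 : N} (h01 : i0 ≠ i1) (k : V) (i : N) :
    trip k0 i0 i1 k i i = 0 := by
  rcases eq_or_ne i i1 with rfl | hi
  · exact trip_ne_a k0 i k (Ne.symm h01) i
  · exact trip_ne_b k0 i0 k i hi

lemma trip_constrA (x : AMoDState N V) (uc : AMoDControl N V) (k0 : V) (i0 i1 : N)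
    (hvw : ∀ k a b, uc.v k a b + uc.w k a b = trip k0 i0 i1 k a b)
    (hx : XNonneg x) (hW : ConfW x k0 i0) :
    ∀ k i, (∑ j : N, (uc.v k i j + uc.w k i j)) ≤ x.u k i + x.p k i 0 := by
  classical
  intro k i
  rw [trip_row_sum uc k0 i0 i1 hvw]
  by_cases hk : k = k0
  · subst hk
    by_cases hi : i = i0
    · subst hi
      rw [if_pos rfl, if_pos rfl, hW.u1, hW.p0]
      norm_num
    · rw [if_pos rfl, if_neg hi]
      linarith [hx.hu k i, hx.hp k i 0]
  · rw [if_neg hk]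
    linarith [hx.hu k i, hx.hp k i 0]

lemma wC_feas (t : N → N → ℕ) (αd : ℝ) (s : AugState N V) (k0 : V) (i0 i1 : N)
    (h01 : i0 ≠ i1) (hx : XNonneg s.x) (hW : ConfW s.x k0 i0)
    (hq : αd * (t i0 i1 : ℝ) ≤ s.q k0) :
    FeasAugControl t αd s (fun _ _ => 0) (wC k0 i0 i1) := by
  refine ⟨⟨⟨fun _ _ _ => Or.inl rfl, fun k i j => trip_bin k0 i0 i1 k i j,
    fun _ _ => rfl, fun k i => trip_diag k0 h01 k i⟩, ?_, ?_⟩, ?_, ?_⟩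
  · exact trip_constrA s.x _ k0 i0 i1 (wC_hvw k0 i0 i1) hx hW
  · intro i j
    simp only [wC, Finset.sum_const_zero, add_zero]
    linarith [hx.hd i j]
  · intro k i j h; exact absurd h (by norm_num [wC])
  · intro k i j h
    obtain ⟨rfl, rfl, rfl⟩ := trip_eq_one k0 i0 i1 h
    exact hq

lemma vC_feas (t : N → N → ℕ) (αd : ℝ) (s : AugState N V) (k0 : V) (i0 i1 : N)
    (h01 : i0 ≠ i1) (hx : XNonneg s.x) (hW : ConfW s.x k0 i0)
    (hd1 : 1 ≤ s.x.d i0 i1)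
    (hq : αd * (t i0 i1 : ℝ) ≤ s.q k0) :
    FeasAugControl t αd s (fun _ _ => 0) (vC k0 i0 i1) := by
  refine ⟨⟨⟨fun k i j => trip_bin k0 i0 i1 k i j, fun _ _ _ => Or.inl rfl,
    fun k i => trip_diag k0 h01 k i, fun _ _ => rfl⟩, ?_, ?_⟩, ?_, ?_⟩
  · exact trip_constrA s.x _ k0 i0 i1 (vC_hvw k0 i0 i1) hx hW
  · intro i j
    show (∑ k : V, trip k0 i0 i1 k i j) ≤ s.x.d i j + 0
    rw [trip_sum_k, add_zero]
    by_cases hi : i = i0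
    · subst hi
      by_cases hj : j = i1
      · subst hj; rw [if_pos rfl, if_pos rfl]; exact hd1
      · rw [if_pos rfl, if_neg hj]; exact hx.hd _ _
    · rw [if_neg hi]; exact hx.hd _ _
  · intro k i j h
    obtain ⟨rfl, rfl, rfl⟩ := trip_eq_one k0 i0 i1 h
    exact hq
  · intro k i j h; exact absurd h (by norm_num [vC])

lemma wC_nonneg_succ (t : N → N → ℕ) (x : AMoDState N V) (k0 : V) (i0 i1 : N)
    (hx : XNonneg x) (hW : ConfW x k0 i0) :
    XNonneg (succState t x (fun _ _ => 0) (wC k0 i0 i1)) := by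
  refine succ_nonneg t x _ hx (fun k a b => ⟨le_refl 0, trip_nonneg k0 i0 i1 k a b⟩)
    (trip_constrA x _ k0 i0 i1 (wC_hvw k0 i0 i1) hx hW) ?_
  intro i j
  simp only [wC, Finset.sum_const_zero]
  exact hx.hd i j

lemma vC_nonneg_succ (t : N → N → ℕ) (x : AMoDState N V) (k0 : V) (i0 i1 : N)
    (hx : XNonneg x) (hW : ConfW x k0 i0) (hd1 : 1 ≤ x.d i0 i1) :
    XNonneg (succState t x (fun _ _ => 0) (vC k0 i0 i1)) := by
  refine succ_nonneg t x _ hx (fun k a b => ⟨trip_nonneg k0 i0 i1 k a b, le_refl 0⟩)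
    (trip_constrA x _ k0 i0 i1 (vC_hvw k0 i0 i1) hx hW) ?_
  intro i j
  show (∑ k : V, trip k0 i0 i1 k i j) ≤ x.d i j
  rw [trip_sum_k]
  by_cases hi : i = i0
  · subst hi
    by_cases hj : j = i1
    · subst hj; rw [if_pos rfl, if_pos rfl]; exact hd1
    · rw [if_pos rfl, if_neg hj]; exact hx.hd _ _
  · rw [if_neg hi]; exact hx.hd _ _

lemma wC_d (t : N → N → ℕ) (x : AMoDState N V) (k0 : V) (i0 i1 : N) :
    (succState t x (fun _ _ => 0) (wC k0 i0 i1)).d = x.d := by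
  funext i j
  rw [succState_d]
  simp [wC]


/-! ### Trajectory-level step lemmas -/

section TrajSteps

variable (t : N → N → ℕ) (αc αd : ℝ) (s : AugState N V) (cs : ℕ → AMoDControl N V)

lemma traj_x (n : ℕ) :
    (traj t αc αd s cs (n + 1)).x
      = succState t (traj t αc αd s cs n).x (fun _ _ => 0) (cs n) := rfl

lemma traj_q (n : ℕ) (k : V) (a b : ℤ)
    (hu : ∑ i : N, (traj t αc αd s cs (n + 1)).x.u k i = a)
    (hp : ∑ i : N, ∑ T ∈ Finset.range (Tmax t i + 1),
        (traj t αc αd s cs (n + 1)).x.p k i T = b) :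
    (traj t αc αd s cs (n + 1)).q k
      = min ((traj t αc αd s cs n).q k + αc * (a : ℝ)) 1 - αd * (b : ℝ) :=
  augSucc_q t αc αd (traj t αc αd s cs n) (cs n) k a b hu hp

lemma charge_step (n : ℕ) (k0 : V) (i0 : N) (hz : cs n = zC)
    (h : ConfW (traj t αc αd s cs n).x k0 i0 ∨ ConfT t (traj t αc αd s cs n).x k0 i0 0) :
    ConfW (traj t αc αd s cs (n + 1)).x k0 i0 ∧
      (traj t αc αd s cs (n + 1)).q k0 = min ((traj t αc αd s cs n).q k0 + αc) 1 := by
  have hW : ConfW (traj t αc αd s cs (n + 1)).x k0 i0 := by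
    rw [traj_x, hz]
    rcases h with h | h
    · exact confW_step t _ k0 i0 h
    · exact confT0_step t _ k0 i0 h
  refine ⟨hW, ?_⟩
  rw [traj_q t αc αd s cs n k0 1 0 hW.sum_u (hW.sum_p t)]
  norm_num

lemma travel_step (n : ℕ) (k0 : V) (i0 : N) (T0 : ℕ) (hz : cs n = zC)
    (h : ConfT t (traj t αc αd s cs n).x k0 i0 (T0 + 1))
    (hq1 : (traj t αc αd s cs n).q k0 ≤ 1) :
    ConfT t (traj t αc αd s cs (n + 1)).x k0 i0 T0 ∧
      (traj t αc αd s cs (n + 1)).q k0 = (traj t αc αd s cs n).q k0 - αd := by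
  have hT : ConfT t (traj t αc αd s cs (n + 1)).x k0 i0 T0 := by
    rw [traj_x, hz]
    exact confT_step t _ k0 i0 T0 h
  refine ⟨hT, ?_⟩
  rw [traj_q t αc αd s cs n k0 0 1 hT.sum_u hT.sum_p]
  simp only [Int.cast_zero, Int.cast_one, mul_zero, add_zero, mul_one]
  rw [min_eq_left hq1]

lemma zero_step (n : ℕ) (hz : cs n = zC) (hx : XNonneg (traj t αc αd s cs n).x) :
    XNonneg (traj t αc αd s cs (n + 1)).x ∧
      (traj t αc αd s cs (n + 1)).x.d = (traj t αc αd s cs n).x.d := by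
  rw [traj_x, hz]
  exact ⟨zC_nonneg_succ t _ hx, zC_d t _⟩

lemma zero_chain (n m : ℕ) (hz : ∀ σ, n ≤ σ → σ < n + m → cs σ = zC)
    (hx : XNonneg (traj t αc αd s cs n).x) :
    ∀ m' ≤ m, XNonneg (traj t αc αd s cs (n + m')).x ∧
      (traj t αc αd s cs (n + m')).x.d = (traj t αc αd s cs n).x.d := by
  intro m' hm'
  induction m' with
  | zero => exact ⟨hx, rfl⟩
  | succ m'' ih =>
    obtain ⟨h1, h2⟩ := ih (by omega)
    have hz' : cs (n + m'') = zC := hz _ (by omega) (by omega)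
    obtain ⟨h3, h4⟩ := zero_step t αc αd s cs (n + m'') hz' h1
    exact ⟨h3, by show (traj t αc αd s cs (n + m'' + 1)).x.d = _; rw [h4, h2]⟩

lemma charge_chain (hαc : 0 ≤ αc) (n m : ℕ) (k0 : V) (i0 : N) (hm : 1 ≤ m)
    (hz : ∀ σ, n ≤ σ → σ < n + m → cs σ = zC)
    (h : ConfW (traj t αc αd s cs n).x k0 i0 ∨ ConfT t (traj t αc αd s cs n).x k0 i0 0) :
    ConfW (traj t αc αd s cs (n + m)).x k0 i0 ∧
      min ((traj t αc αd s cs n).q k0 + m * αc) 1 ≤ (traj t αc αd s cs (n + m)).q k0 ∧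
      (traj t αc αd s cs (n + m)).q k0 ≤ 1 := by
  induction m with
  | zero => omega
  | succ m' ih =>
    rcases Nat.eq_or_lt_of_le hm with h1 | h1
    · obtain rfl : m' = 0 := by omega
      obtain ⟨hW, hq⟩ := charge_step t αc αd s cs n k0 i0 (hz n (le_refl _) (by omega)) h
      refine ⟨hW, ?_, ?_⟩
      · rw [hq]; push_cast; norm_num
      · rw [hq]; exact min_le_right _ _
    · have hm' : 1 ≤ m' := by omega
      obtain ⟨hW, hq, hq1⟩ := ih hm' (fun σ (ha : n ≤ σ) (hb : σ < n + m') => hz σ ha (by omega))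
      obtain ⟨hW', hq'⟩ := charge_step t αc αd s cs (n + m') k0 i0
        (hz _ (by omega) (by omega)) (Or.inl hW)
      rw [show n + m' + 1 = n + (m' + 1) by omega] at hW' hq'
      refine ⟨hW', ?_, ?_⟩
      · rw [hq']
        rcases le_total ((traj t αc αd s cs n).q k0 + m' * αc) 1 with hc | hc
        · have : (traj t αc αd s cs n).q k0 + m' * αc ≤ (traj t αc αd s cs (n + m')).q k0 := by
            rw [min_eq_left hc] at hq; exact hq
          have h2 : (traj t αc αd s cs n).q k0 + (↑m' + 1) * αc
              ≤ (traj t αc αd s cs (n + m')).q k0 + αc := by push_cast; linarith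
          calc min ((traj t αc αd s cs n).q k0 + (↑(m' + 1)) * αc) 1
              ≤ min ((traj t αc αd s cs (n + m')).q k0 + αc) 1 := by
                apply min_le_min _ (le_refl 1)
                push_cast
                linarith
            _ = _ := rfl
        · have h2 : (1:ℝ) ≤ (traj t αc αd s cs (n + m')).q k0 := by
            rw [min_eq_right hc] at hq; exact hq
          calc min ((traj t αc αd s cs n).q k0 + (↑(m' + 1)) * αc) 1 ≤ 1 := min_le_right _ _
            _ ≤ min ((traj t αc αd s cs (n + m')).q k0 + αc) 1 := le_min (by linarith) (le_refl 1)
      · rw [hq']; exact min_le_right _ _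

lemma travel_chain (hαd : 0 ≤ αd) (n : ℕ) (k0 : V) (i0 : N) (T0 : ℕ)
    (hz : ∀ σ, n ≤ σ → σ < n + T0 → cs σ = zC)
    (h : ConfT t (traj t αc αd s cs n).x k0 i0 T0)
    (hq1 : (traj t αc αd s cs n).q k0 ≤ 1) :
    ConfT t (traj t αc αd s cs (n + T0)).x k0 i0 0 ∧
      (traj t αc αd s cs (n + T0)).q k0 = (traj t αc αd s cs n).q k0 - T0 * αd ∧
      (traj t αc αd s cs (n + T0)).q k0 ≤ 1 := by
  induction T0 generalizing n with
  | zero => exact ⟨h, by norm_num, hq1⟩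
  | succ T' ih =>
    obtain ⟨hT, hq⟩ := travel_step t αc αd s cs n k0 i0 T' (hz n (le_refl _) (by omega)) h hq1
    have hq1' : (traj t αc αd s cs (n + 1)).q k0 ≤ 1 := by
      rw [hq]; linarith
    obtain ⟨h1, h2, h3⟩ := ih (n + 1)
      (fun σ (ha : n + 1 ≤ σ) (hb : σ < n + 1 + T') => hz σ (by omega) (by omega)) hT hq1' 
    rw [show n + 1 + T' = n + (T' + 1) by omega] at h1 h2 h3
    refine ⟨h1, ?_, h3⟩
    rw [h2, hq]
    push_cast
    ring


lemma reb_step (n : ℕ) (k0 : V) (i0 i1 : N) (h01 : i0 ≠ i1) (hz : cs n = wC k0 i0 i1)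
    (h1 : 1 ≤ t i0 i1) (hTm : t i0 i1 - 1 ≤ Tmax t i1)
    (hx : XNonneg (traj t αc αd s cs n).x) (hW : ConfW (traj t αc αd s cs n).x k0 i0)
    (hq : αd * (t i0 i1 : ℝ) ≤ (traj t αc αd s cs n).q k0)
    (hq1 : (traj t αc αd s cs n).q k0 ≤ 1) :
    FeasAugControl t αd (traj t αc αd s cs n) (fun _ _ => 0) (cs n) ∧
      ConfT t (traj t αc αd s cs (n + 1)).x k0 i1 (t i0 i1 - 1) ∧
      XNonneg (traj t αc αd s cs (n + 1)).x ∧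
      (traj t αc αd s cs (n + 1)).x.d = (traj t αc αd s cs n).x.d ∧
      (traj t αc αd s cs (n + 1)).q k0 = (traj t αc αd s cs n).q k0 - αd := by
  have hT : ConfT t (traj t αc αd s cs (n + 1)).x k0 i1 (t i0 i1 - 1) := by
    rw [traj_x, hz]
    exact trip_conf t _ _ k0 i0 i1 (wC_hvw k0 i0 i1) hW h1 hTm
  refine ⟨?_, hT, ?_, ?_, ?_⟩
  · rw [hz]; exact wC_feas t αd _ k0 i0 i1 h01 hx hW hq
  · rw [traj_x, hz]; exact wC_nonneg_succ t _ k0 i0 i1 hx hW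
  · rw [traj_x, hz]; exact wC_d t _ k0 i0 i1
  · rw [traj_q t αc αd s cs n k0 0 1 hT.sum_u hT.sum_p]
    simp only [Int.cast_zero, Int.cast_one, mul_zero, add_zero, mul_one]
    rw [min_eq_left hq1]

lemma pick_step (n : ℕ) (k0 : V) (i0 i1 : N) (h01 : i0 ≠ i1) (hz : cs n = vC k0 i0 i1)
    (hx : XNonneg (traj t αc αd s cs n).x) (hW : ConfW (traj t αc αd s cs n).x k0 i0)
    (hd1 : 1 ≤ (traj t αc αd s cs n).x.d i0 i1)
    (hq : αd * (t i0 i1 : ℝ) ≤ (traj t αc αd s cs n).q k0) :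
    FeasAugControl t αd (traj t αc αd s cs n) (fun _ _ => 0) (cs n) ∧
      XNonneg (traj t αc αd s cs (n + 1)).x := by
  constructor
  · rw [hz]; exact vC_feas t αd _ k0 i0 i1 h01 hx hW hd1 hq
  · rw [traj_x, hz]; exact vC_nonneg_succ t _ k0 i0 i1 hx hW hd1

end TrajSteps

/-! ### Extraction of the initial configuration -/

lemma sum_eq_one_split {α : Type*} (sfin : Finset α) (f : α → ℤ)
    (h0 : ∀ a ∈ sfin, 0 ≤ f a) (h1 : ∑ a ∈ sfin, f a = 1) :
    ∃ a ∈ sfin, f a = 1 ∧ ∀ b ∈ sfin, b ≠ a → f b = 0 := by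
  classical
  have hex : ∃ a ∈ sfin, f a ≠ 0 := by
    by_contra h
    push_neg at h
    rw [Finset.sum_eq_zero h] at h1
    norm_num at h1
  obtain ⟨a, ha, hfa⟩ := hex
  have hsplit : f a + ∑ b ∈ sfin.erase a, f b = 1 := by
    rw [Finset.add_sum_erase _ _ ha]; exact h1
  have herase_nn : 0 ≤ ∑ b ∈ sfin.erase a, f b :=
    Finset.sum_nonneg fun b hb => h0 b (Finset.mem_of_mem_erase hb)
  have hfa1 : f a = 1 := by have := h0 a ha; omega
  have herase0 : ∑ b ∈ sfin.erase a, f b = 0 := by omega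
  refine ⟨a, ha, hfa1, fun b hb hba => ?_⟩
  exact (Finset.sum_eq_zero_iff_of_nonneg
    (fun c hc => h0 c (Finset.mem_of_mem_erase hc))).mp herase0 b
    (Finset.mem_erase.mpr ⟨hba, hb⟩)

lemma feas_xnonneg (t : N → N → ℕ) {x : AMoDState N V} (hx : FeasState t x) : XNonneg x := by
  constructor
  · exact hx.isState.d_nonneg
  · intro k i T
    rcases le_or_gt T (Tmax t i) with h | h
    · rcases hx.isState.p_bin k i T h with h' | h' <;> rw [h'] <;> norm_num
    · rw [hx.isState.p_oob k i T h]
  · intro k i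
    rcases hx.isState.u_bin k i with h' | h' <;> rw [h'] <;> norm_num

lemma init_conf (t : N → N → ℕ) (x : AMoDState N V) (hx : FeasState t x) (k0 : V) :
    (∃ i0, ConfW x k0 i0) ∨ (∃ i0 T0, ConfT t x k0 i0 T0) := by
  classical
  have hxn := feas_xnonneg t hx
  have hpnn : ∀ i : N, (0:ℤ) ≤ ∑ T ∈ Finset.range (Tmax t i + 1), x.p k0 i T :=
    fun i => Finset.sum_nonneg fun T _ => hxn.hp k0 i T
  have hpS : 0 ≤ pSum t x k0 := Finset.sum_nonneg fun i _ => hpnn i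
  have huS : 0 ≤ ∑ i : N, x.u k0 i := Finset.sum_nonneg fun i _ => hxn.hu k0 i
  have hup := hx.constrUP k0
  unfold pSum at hpS hup
  have hcase : (∑ i : N, x.u k0 i) = 0 ∨ (∑ i : N, x.u k0 i) = 1 := by omega
  rcases hcase with hu0 | hu1
  · -- travelling
    right
    have hp1 : (∑ i : N, ∑ T ∈ Finset.range (Tmax t i + 1), x.p k0 i T) = 1 := by omega
    obtain ⟨i0, _, hgi0, hg0⟩ := sum_eq_one_split Finset.univ
      (fun i => ∑ T ∈ Finset.range (Tmax t i + 1), x.p k0 i T)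
      (fun i _ => hpnn i) hp1
    obtain ⟨T0, hT0mem, hpT0, hpT⟩ := sum_eq_one_split (Finset.range (Tmax t i0 + 1))
      (fun T => x.p k0 i0 T) (fun T _ => hxn.hp k0 i0 T) hgi0
    have hT0 : T0 ≤ Tmax t i0 := by
      have := Finset.mem_range.mp hT0mem; omega
    refine ⟨i0, T0, hpT0, ?_, ?_, hT0⟩
    · intro a T haT
      rcases le_or_gt T (Tmax t a) with hle | hlt
      · rcases eq_or_ne a i0 with rfl | ha
        · have hTne : T ≠ T0 := fun hc => haT ⟨rfl, hc⟩
          exact hpT T (Finset.mem_range.mpr (by omega)) hTne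
        · have := hg0 a (Finset.mem_univ a) ha
          exact (Finset.sum_eq_zero_iff_of_nonneg
            (fun T' _ => hxn.hp k0 a T')).mp this T (Finset.mem_range.mpr (by omega))
      · exact hx.isState.p_oob k0 a T hlt
    · intro a
      exact (Finset.sum_eq_zero_iff_of_nonneg
        (fun i _ => hxn.hu k0 i)).mp hu0 a (Finset.mem_univ a)
  · -- waiting
    left
    have hp0 : (∑ i : N, ∑ T ∈ Finset.range (Tmax t i + 1), x.p k0 i T) = 0 := by omega
    obtain ⟨i0, _, hui0, hu0⟩ := sum_eq_one_split Finset.univ (fun i => x.u k0 i)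
      (fun i _ => hxn.hu k0 i) hu1
    refine ⟨i0, hui0, fun a ha => hu0 a (Finset.mem_univ a) ha, ?_⟩
    intro a T
    rcases le_or_gt T (Tmax t a) with hle | hlt
    · have ha := (Finset.sum_eq_zero_iff_of_nonneg (fun i _ => hpnn i)).mp hp0 a
        (Finset.mem_univ a)
      exact (Finset.sum_eq_zero_iff_of_nonneg (fun T' _ => hxn.hp k0 a T')).mp ha T
        (Finset.mem_range.mpr (by omega))
    · exact hx.isState.p_oob k0 a T hlt

end ServiceAux









/-- **Key lemma for Theorem 2 (service reachability with charging):** from any feasible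
augmented state with at least one waiting customer there is a feasible trajectory of
the undisturbed augmented system over `L = 2·tmax + 2·⌈(α_d/α_c)·tmax⌉` steps along
which at least one waiting customer is picked up. -/
theorem aug_service_reachability {N V : Type} [Fintype N] [DecidableEq N] [Fintype V]
    [Nonempty V] (t : N → N → ℕ) (hcard : 2 ≤ Fintype.card N)
    (ht : ∀ i j : N, i ≠ j → 1 ≤ t i j)
    (αc αd : ℝ) (hαc : 0 < αc) (hαd : 0 < αd)
    (hrange : αd * (tmax t : ℝ) ≤ 1)
    (s : AugState N V) (hs : FeasAugState t αd s)
    (hd : 1 ≤ ∑ i : N, ∑ j : N, s.x.d i j) :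
    ∃ (ss : ℕ → AugState N V) (cs : ℕ → AMoDControl N V),
      FeasAugTraj t αc αd s (2 * tmax t + 2 * (⌈αd / αc * (tmax t : ℝ)⌉).toNat) ss cs ∧
        ∃ τ < 2 * tmax t + 2 * (⌈αd / αc * (tmax t : ℝ)⌉).toNat,
          ∃ (k : V) (i j : N), (cs τ).v k i j = 1 := by
  classical
  obtain ⟨k0⟩ := (inferInstance : Nonempty V)
  set C := (⌈αd / αc * (tmax t : ℝ)⌉).toNat with hCdef
  -- a waiting customer
  have hcust : ∃ i j : N, 1 ≤ s.x.d i j := by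
    by_contra h
    push_neg at h
    have hle : (∑ i : N, ∑ j : N, s.x.d i j) ≤ 0 :=
      Finset.sum_nonpos fun i _ => Finset.sum_nonpos fun j _ => by have := h i j; omega
    omega
  obtain ⟨i, j, hdij⟩ := hcust
  have hij : i ≠ j := by
    rintro rfl
    rw [hs.feasState.isState.d_diag i] at hdij
    omega
  -- numeric facts
  have htm1 : 1 ≤ tmax t := by
    have := Tmax_lt_tmax t hcard ht i
    omega
  have htij_le : t i j ≤ tmax t := t_le_tmax t hij
  have hceil_pos : (0:ℤ) < ⌈αd / αc * (tmax t : ℝ)⌉ := by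
    apply Int.ceil_pos.mpr
    apply mul_pos (div_pos hαd hαc)
    exact_mod_cast htm1
  have hC1 : 1 ≤ C := by rw [hCdef]; omega
  have hCc : αd * (tmax t : ℝ) ≤ (C : ℝ) * αc := by
    have h3 : (C : ℝ) = ((⌈αd / αc * (tmax t : ℝ)⌉ : ℤ) : ℝ) := by
      rw [hCdef]
      exact_mod_cast congrArg (fun z : ℤ => (z : ℝ)) (Int.toNat_of_nonneg hceil_pos.le)
    have h1 : (αd / αc * (tmax t : ℝ)) ≤ (C : ℝ) := by
      rw [h3]; exact Int.le_ceil _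
    calc αd * (tmax t : ℝ) = (αd / αc * (tmax t : ℝ)) * αc := by field_simp
      _ ≤ (C : ℝ) * αc := mul_le_mul_of_nonneg_right h1 hαc.le
  have hmin : ∀ q0 : ℝ, 0 ≤ q0 → αd * (tmax t : ℝ) ≤ min (q0 + (C:ℝ) * αc) 1 :=
    fun q0 h0 => le_min (by linarith) hrange
  have htij_le' : αd * (t i j : ℝ) ≤ αd * (tmax t : ℝ) := by
    apply mul_le_mul_of_nonneg_left _ hαd.le
    exact_mod_cast htij_le
  -- initial configuration
  obtain ⟨i0, τ0, hτ0lt, hstart⟩ : ∃ i0 τ0, τ0 < tmax t ∧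
      ((ConfW s.x k0 i0 ∧ τ0 = 0) ∨ ConfT t s.x k0 i0 τ0) := by
    rcases init_conf t s.x hs.feasState k0 with ⟨i0, hW0⟩ | ⟨i0, T0, hT0⟩
    · exact ⟨i0, 0, by omega, Or.inl ⟨hW0, rfl⟩⟩
    · refine ⟨i0, T0, ?_, Or.inr hT0⟩
      have h1 := hT0.hT
      have h2 := Tmax_lt_tmax t hcard ht i0
      omega
  rcases eq_or_ne i0 i with rfl | hne
  · -- Case 1: the vehicle's station already has the customer.
    set cs : ℕ → AMoDControl N V := fun τ => if τ = τ0 + C then vC k0 i0 j else zC with hcs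
    have hz0 : ∀ σ, σ ≠ τ0 + C → cs σ = zC := by
      intro σ h
      rw [hcs]
      exact if_neg h
    have hc1 : cs (τ0 + C) = vC k0 i0 j := by
      rw [hcs]
      exact if_pos rfl
    have hstart' : (ConfW (traj t αc αd s cs τ0).x k0 i0 ∨
          ConfT t (traj t αc αd s cs τ0).x k0 i0 0) ∧
        0 ≤ (traj t αc αd s cs τ0).q k0 ∧ (traj t αc αd s cs τ0).q k0 ≤ 1 ∧
        XNonneg (traj t αc αd s cs τ0).x ∧ (traj t αc αd s cs τ0).x.d = s.x.d := by
      rcases hstart with ⟨hW0, rfl⟩ | hT0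
      · exact ⟨Or.inl hW0, hs.q_nonneg k0, hs.q_le_one k0,
          feas_xnonneg t hs.feasState, rfl⟩
      · have hqr := hs.q_range k0 i0 τ0 hT0.p1
        obtain ⟨hT', hqeq, hq1⟩ := travel_chain t αc αd s cs hαd.le 0 k0 i0 τ0
          (fun σ h1 h2 => hz0 σ (by omega)) hT0 (hs.q_le_one k0)
        obtain ⟨hxn, hdd⟩ := zero_chain t αc αd s cs 0 τ0
          (fun σ h1 h2 => hz0 σ (by omega)) (feas_xnonneg t hs.feasState) τ0 (le_refl _)
        rw [Nat.zero_add] at hT' hqeq hq1 hxn hdd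
        have hq00 : (traj t αc αd s cs 0).q k0 = s.q k0 := rfl
        rw [hq00] at hqeq
        exact ⟨Or.inr hT', by rw [hqeq]; linarith, hq1, hxn, hdd⟩
    obtain ⟨hat, hq0, hq1, hxn0, hdd0⟩ := hstart'
    obtain ⟨hW1, hqlb, hq11⟩ := charge_chain t αc αd s cs hαc.le τ0 C k0 i0 hC1
      (fun σ h1 h2 => hz0 σ (by omega)) hat
    obtain ⟨hxn1, hdd1⟩ := zero_chain t αc αd s cs τ0 C
      (fun σ h1 h2 => hz0 σ (by omega)) hxn0 C (le_refl _)
    have hq1tm : αd * (tmax t : ℝ) ≤ (traj t αc αd s cs (τ0 + C)).q k0 :=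
      le_trans (hmin _ hq0) hqlb
    have hd1τ1 : 1 ≤ (traj t αc αd s cs (τ0 + C)).x.d i0 j := by
      rw [hdd1, hdd0]; exact hdij
    obtain ⟨hfeas1, hxn2⟩ := pick_step t αc αd s cs (τ0 + C) k0 i0 j hij hc1 hxn1 hW1
      hd1τ1 (le_trans htij_le' hq1tm)
    refine ⟨traj t αc αd s cs, cs, ⟨rfl, ?_⟩, τ0 + C, by omega, k0, i0, j, ?_⟩
    · intro τ hτ
      refine ⟨?_, rfl⟩
      rcases eq_or_ne τ (τ0 + C) with rfl | hτne
      · exact hfeas1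
      · rw [hz0 τ hτne]
        rcases lt_or_gt_of_ne hτne with hlt | hgt
        · obtain ⟨hxn, _⟩ := zero_chain t αc αd s cs 0 (τ0 + C)
            (fun σ h1 h2 => hz0 σ (by omega)) (feas_xnonneg t hs.feasState) τ (by omega)
          rw [Nat.zero_add] at hxn
          exact zC_feas t αd _ hxn
        · obtain ⟨m, rfl⟩ : ∃ m, τ = (τ0 + C + 1) + m := ⟨τ - (τ0 + C + 1), by omega⟩
          obtain ⟨hxn, _⟩ := zero_chain t αc αd s cs (τ0 + C + 1) m
            (fun σ h1 h2 => hz0 σ (by omega)) hxn2 m (le_refl _)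
          exact zC_feas t αd _ hxn
    · rw [hc1]
      exact trip_self k0 i0 j
  · -- Case 2: rebalance first.
    have hti0 : 1 ≤ t i0 i := ht i0 i hne
    have hti0_le : t i0 i ≤ tmax t := t_le_tmax t hne
    have hTm := t_sub_le_Tmax t hne
    set cs : ℕ → AMoDControl N V := fun τ =>
      if τ = τ0 + C then wC k0 i0 i
      else if τ = τ0 + C + t i0 i + C then vC k0 i j else zC with hcs
    have hz0 : ∀ σ, σ ≠ τ0 + C → σ ≠ τ0 + C + t i0 i + C → cs σ = zC := by
      intro σ h1 h2
      show (if σ = τ0 + C then wC k0 i0 i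
        else if σ = τ0 + C + t i0 i + C then vC k0 i j else zC) = zC
      rw [if_neg h1, if_neg h2]
    have hc1 : cs (τ0 + C) = wC k0 i0 i := by
      show (if τ0 + C = τ0 + C then wC k0 i0 i
        else if τ0 + C = τ0 + C + t i0 i + C then vC k0 i j else zC) = wC k0 i0 i
      rw [if_pos rfl]
    have hc3 : cs (τ0 + C + t i0 i + C) = vC k0 i j := by
      show (if τ0 + C + t i0 i + C = τ0 + C then wC k0 i0 i
        else if τ0 + C + t i0 i + C = τ0 + C + t i0 i + C then vC k0 i j else zC)
          = vC k0 i j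
      rw [if_neg (by omega), if_pos rfl]
    have hstart' : (ConfW (traj t αc αd s cs τ0).x k0 i0 ∨
          ConfT t (traj t αc αd s cs τ0).x k0 i0 0) ∧
        0 ≤ (traj t αc αd s cs τ0).q k0 ∧ (traj t αc αd s cs τ0).q k0 ≤ 1 ∧
        XNonneg (traj t αc αd s cs τ0).x ∧ (traj t αc αd s cs τ0).x.d = s.x.d := by
      rcases hstart with ⟨hW0, rfl⟩ | hT0
      · exact ⟨Or.inl hW0, hs.q_nonneg k0, hs.q_le_one k0,
          feas_xnonneg t hs.feasState, rfl⟩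
      · have hqr := hs.q_range k0 i0 τ0 hT0.p1
        obtain ⟨hT', hqeq, hq1⟩ := travel_chain t αc αd s cs hαd.le 0 k0 i0 τ0
          (fun σ h1 h2 => hz0 σ (by omega) (by omega)) hT0 (hs.q_le_one k0)
        obtain ⟨hxn, hdd⟩ := zero_chain t αc αd s cs 0 τ0
          (fun σ h1 h2 => hz0 σ (by omega) (by omega)) (feas_xnonneg t hs.feasState)
          τ0 (le_refl _)
        rw [Nat.zero_add] at hT' hqeq hq1 hxn hdd
        have hq00 : (traj t αc αd s cs 0).q k0 = s.q k0 := rfl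
        rw [hq00] at hqeq
        exact ⟨Or.inr hT', by rw [hqeq]; linarith, hq1, hxn, hdd⟩
    obtain ⟨hat, hq0, hq1, hxn0, hdd0⟩ := hstart'
    obtain ⟨hW1, hqlb, hq11⟩ := charge_chain t αc αd s cs hαc.le τ0 C k0 i0 hC1
      (fun σ h1 h2 => hz0 σ (by omega) (by omega)) hat
    obtain ⟨hxn1, hdd1⟩ := zero_chain t αc αd s cs τ0 C
      (fun σ h1 h2 => hz0 σ (by omega) (by omega)) hxn0 C (le_refl _)
    have hq1tm : αd * (tmax t : ℝ) ≤ (traj t αc αd s cs (τ0 + C)).q k0 :=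
      le_trans (hmin _ hq0) hqlb
    have hti0R : (t i0 i : ℝ) ≤ (tmax t : ℝ) := by exact_mod_cast hti0_le
    have hq1reb : αd * (t i0 i : ℝ) ≤ (traj t αc αd s cs (τ0 + C)).q k0 := by
      have : αd * (t i0 i : ℝ) ≤ αd * (tmax t : ℝ) :=
        mul_le_mul_of_nonneg_left hti0R hαd.le
      linarith
    obtain ⟨hfeas1, hT2, hxn2, hdd2, hq2⟩ := reb_step t αc αd s cs (τ0 + C) k0 i0 i hne
      hc1 hti0 hTm hxn1 hW1 hq1reb hq11
    -- travel to station i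
    obtain ⟨hT3, hq3, hq31⟩ := travel_chain t αc αd s cs hαd.le (τ0 + C + 1) k0 i
      (t i0 i - 1) (fun σ h1 h2 => hz0 σ (by omega) (by omega)) hT2
      (by rw [hq2]; linarith)
    obtain ⟨hxn3, hdd3⟩ := zero_chain t αc αd s cs (τ0 + C + 1) (t i0 i - 1)
      (fun σ h1 h2 => hz0 σ (by omega) (by omega)) hxn2 (t i0 i - 1) (le_refl _)
    rw [show τ0 + C + 1 + (t i0 i - 1) = τ0 + C + t i0 i by omega] at hT3 hq3 hq31 hxn3 hdd3
    have hq30 : 0 ≤ (traj t αc αd s cs (τ0 + C + t i0 i)).q k0 := by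
      rw [hq3, hq2]
      have hcast : ((t i0 i - 1 : ℕ) : ℝ) = (t i0 i : ℝ) - 1 := by
        push_cast [hti0]
        ring
      rw [hcast]
      have : αd * (t i0 i : ℝ) ≤ αd * (tmax t : ℝ) :=
        mul_le_mul_of_nonneg_left hti0R hαd.le
      nlinarith
    -- recharge at station i
    obtain ⟨hW4, hqlb4, hq41⟩ := charge_chain t αc αd s cs hαc.le (τ0 + C + t i0 i) C k0 i
      hC1 (fun σ h1 h2 => hz0 σ (by omega) (by omega)) (Or.inr hT3)
    obtain ⟨hxn4, hdd4⟩ := zero_chain t αc αd s cs (τ0 + C + t i0 i) C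
      (fun σ h1 h2 => hz0 σ (by omega) (by omega)) hxn3 C (le_refl _)
    have hq4tm : αd * (tmax t : ℝ) ≤ (traj t αc αd s cs (τ0 + C + t i0 i + C)).q k0 :=
      le_trans (hmin _ hq30) hqlb4
    have hd4 : 1 ≤ (traj t αc αd s cs (τ0 + C + t i0 i + C)).x.d i j := by
      rw [hdd4, hdd3, hdd2, hdd1, hdd0]; exact hdij
    obtain ⟨hfeas4, hxn5⟩ := pick_step t αc αd s cs (τ0 + C + t i0 i + C) k0 i j hij hc3
      hxn4 hW4 hd4 (le_trans htij_le' hq4tm)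
    refine ⟨traj t αc αd s cs, cs, ⟨rfl, ?_⟩, τ0 + C + t i0 i + C, by omega, k0, i, j, ?_⟩
    · intro τ hτ
      refine ⟨?_, rfl⟩
      rcases eq_or_ne τ (τ0 + C) with rfl | hτne1
      · exact hfeas1
      rcases eq_or_ne τ (τ0 + C + t i0 i + C) with rfl | hτne3
      · exact hfeas4
      rw [hz0 τ hτne1 hτne3]
      rcases lt_or_gt_of_ne hτne1 with hlt | hgt
      · obtain ⟨hxn, _⟩ := zero_chain t αc αd s cs 0 (τ0 + C)
          (fun σ h1 h2 => hz0 σ (by omega) (by omega)) (feas_xnonneg t hs.feasState)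
          τ (by omega)
        rw [Nat.zero_add] at hxn
        exact zC_feas t αd _ hxn
      rcases lt_or_gt_of_ne hτne3 with hlt3 | hgt3
      · obtain ⟨m, rfl⟩ : ∃ m, τ = (τ0 + C + 1) + m := ⟨τ - (τ0 + C + 1), by omega⟩
        obtain ⟨hxn, _⟩ := zero_chain t αc αd s cs (τ0 + C + 1)
          (t i0 i - 1 + C) (fun σ h1 h2 => hz0 σ (by omega) (by omega)) hxn2 m (by omega)
        exact zC_feas t αd _ hxn
      · obtain ⟨m, rfl⟩ : ∃ m, τ = (τ0 + C + t i0 i + C + 1) + m :=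
          ⟨τ - (τ0 + C + t i0 i + C + 1), by omega⟩
        obtain ⟨hxn, _⟩ := zero_chain t αc αd s cs (τ0 + C + t i0 i + C + 1) m
          (fun σ h1 h2 => hz0 σ (by omega) (by omega)) hxn5 m (le_refl _)
        exact zC_feas t αd _ hxn
    · rw [hc3]
      exact trip_self k0 i j
end

section
/- Preservation of the single-trip constraint (step in the proof of Proposition 1): If x = (d, p, u) is a feasible state, c are arrivals, and (v, w) is a control feasible at (x, c), then for every vehicle k ∈ V the successor travel indicators satisfy Σ_{i ∈ N} Σ_{T=0}^{Tmax(i)} p⁺(k,i,T) ≤ 1, i.e., constraint (P) is preserved even though it is never explicitly enforced on the controls. -/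
variable {N V : Type} [Fintype N] [DecidableEq N] [Fintype V]

/-- **Preservation of the single-trip constraint (P)** (step in the proof of
Proposition 1): for every vehicle `k`, `Σ_{i,T} p⁺(k,i,T) ≤ 1`. -/
theorem succ_p_single_trip {N V : Type} [Fintype N] [DecidableEq N] [Fintype V]
    (t : N → N → ℕ) (hcard : 2 ≤ Fintype.card N) (ht : ∀ i j : N, i ≠ j → 1 ≤ t i j)
    (x : AMoDState N V) (hx : FeasState t x)
    (c : N → N → ℤ) (hc : IsArrivals c)
    (uc : AMoDControl N V) (huc : FeasControl t x c uc) :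
    ∀ k : V, pSum t (succState t x c uc) k ≤ 1 := by
  intro k
  have hle : ∀ i j : N, j ≠ i → 1 ≤ t j i ∧ t j i ≤ Tmax t i + 1 := by
    intro i j hji
    have h1 : t j i ≤ ((Finset.univ : Finset N).erase i).sup (fun j => t j i) :=
      Finset.le_sup (f := fun j => t j i) (Finset.mem_erase.2 ⟨hji, Finset.mem_univ j⟩)
    have h2 := ht j i hji
    unfold Tmax
    omega
  have key : ∀ i : N, ∑ T ∈ Finset.range (Tmax t i + 1), (succState t x c uc).p k i T
      = (∑ T ∈ Finset.range (Tmax t i + 1), x.p k i T) - x.p k i 0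
        + ∑ j : N, (uc.v k j i + uc.w k j i) := by
    intro i
    have hstep : ∀ T ∈ Finset.range (Tmax t i), (succState t x c uc).p k i T
        = x.p k i (T+1) + ∑ j ∈ Finset.univ.filter (fun j => t j i = T+1),
            (uc.v k j i + uc.w k j i) := by
      intro T hT
      simp only [Finset.mem_range] at hT
      simp [succState, hT]
    have hlast : (succState t x c uc).p k i (Tmax t i)
        = ∑ j ∈ Finset.univ.filter (fun j => t j i = Tmax t i + 1),
            (uc.v k j i + uc.w k j i) := by
      simp [succState]
    have hf : ∑ T ∈ Finset.range (Tmax t i + 1),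
          ∑ j ∈ Finset.univ.filter (fun j => t j i = T + 1), (uc.v k j i + uc.w k j i)
        = ∑ j : N, (uc.v k j i + uc.w k j i) := by
      have : ∀ T, ∑ j ∈ Finset.univ.filter (fun j => t j i = T + 1),
            (uc.v k j i + uc.w k j i)
          = ∑ j : N, if t j i = T + 1 then (uc.v k j i + uc.w k j i) else 0 := by
        intro T; rw [Finset.sum_filter]
      simp only [this]
      rw [Finset.sum_comm]
      refine Finset.sum_congr rfl (fun j _ => ?_)
      by_cases hji : j = i
      · subst hji
        simp [huc.isControl.v_diag k j, huc.isControl.w_diag k j]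
      · obtain ⟨h1, h2⟩ := hle i j hji
        rw [Finset.sum_eq_single_of_mem (t j i - 1)
          (Finset.mem_range.2 (by omega))]
        · rw [if_pos (by omega)]
        · intro b _ hb
          rw [if_neg (by omega)]
    have hp : ∑ T ∈ Finset.range (Tmax t i), x.p k i (T+1)
        = (∑ T ∈ Finset.range (Tmax t i + 1), x.p k i T) - x.p k i 0 := by
      rw [Finset.sum_range_succ' (fun T => x.p k i T)]
      ring
    rw [Finset.sum_range_succ, Finset.sum_congr rfl hstep, hlast,
      Finset.sum_add_distrib, hp]
    rw [Finset.sum_range_succ (fun T => ∑ j ∈ Finset.univ.filter (fun j => t j i = T + 1),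
      (uc.v k j i + uc.w k j i))] at hf
    linarith [hf]
  have hsum : pSum t (succState t x c uc) k
      = pSum t x k - (∑ i : N, x.p k i 0)
        + ∑ i : N, ∑ j : N, (uc.v k j i + uc.w k j i) := by
    unfold pSum
    rw [Finset.sum_congr rfl (fun i _ => key i)]
    rw [Finset.sum_add_distrib, Finset.sum_sub_distrib]
  have hswap : ∑ i : N, ∑ j : N, (uc.v k j i + uc.w k j i)
      = ∑ j : N, ∑ i : N, (uc.v k j i + uc.w k j i) := Finset.sum_comm
  have hA : ∑ j : N, ∑ i : N, (uc.v k j i + uc.w k j i)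
      ≤ ∑ j : N, (x.u k j + x.p k j 0) :=
    Finset.sum_le_sum (fun j _ => huc.constrA k j)
  have hUP := hx.constrUP k
  have hsplit : ∑ j : N, (x.u k j + x.p k j 0)
      = (∑ j : N, x.u k j) + ∑ j : N, x.p k j 0 := Finset.sum_add_distrib
  rw [hsum, hswap]
  linarith
end

section
/- Vanishing of controls after demand is cleared (the paper's claim that J_x(x(t)) → 0 causes J_u(u(t)) → 0 and hence u(t) → 0): Consider the undisturbed system, a horizon t_hor ≥ 1, and a weight ρ₁ > 0. If x is a feasible state whose waiting-customer counts are all zero (d(i,j) = 0 for all i, j ∈ N), then every MPC-optimal plan at x has identically zero controls, i.e., v(τ) ≡ 0 and w(τ) ≡ 0 for all τ = 0, …, t_hor − 1. Consequently, along any MPC trajectory of the undisturbed system, once all waiting-customer counts are zero at some time they remain zero forever and all subsequently applied controls are zero. -/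
variable {N V : Type} [Fintype N] [DecidableEq N] [Fintype V]

/-! ### Auxiliary lemmas -/

section Aux

variable {N V : Type} [Fintype N] [DecidableEq N] [Fintype V]

/-- The zero control. -/
def zeroCtrl (N V : Type) : AMoDControl N V := ⟨fun _ _ _ => 0, fun _ _ _ => 0⟩

/-- The trajectory from `x` with all controls zero. -/
def zeroPlan (t : N → N → ℕ) (x : AMoDState N V) : ℕ → AMoDState N V
  | 0 => x
  | n + 1 => succState t (zeroPlan t x n) (fun _ _ => 0) (zeroCtrl N V)

lemma zeroPlan_d (t : N → N → ℕ) (x : AMoDState N V) (n : ℕ) :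
    ∀ i j, (zeroPlan t x n).d i j = x.d i j := by
  induction n with
  | zero => intro i j; rfl
  | succ n ih =>
    intro i j
    simp [zeroPlan, succState, zeroCtrl, ih i j]

lemma zeroPlan_nonneg (t : N → N → ℕ) (x : AMoDState N V)
    (hp : ∀ k i T, 0 ≤ x.p k i T) (hu : ∀ k i, 0 ≤ x.u k i) (n : ℕ) :
    (∀ k i T, 0 ≤ (zeroPlan t x n).p k i T) ∧ (∀ k i, 0 ≤ (zeroPlan t x n).u k i) := by
  induction n with
  | zero => exact ⟨hp, hu⟩
  | succ n ih =>
    constructor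
    · intro k i T
      simp only [zeroPlan, succState, zeroCtrl]
      split
      · simpa using ih.1 k i (T + 1)
      · split <;> simp
    · intro k i
      simp only [zeroPlan, succState, zeroCtrl]
      have := ih.1 k i 0
      have := ih.2 k i
      simp; omega

lemma zeroPlan_feasTraj (t : N → N → ℕ) (x : AMoDState N V)
    (hp : ∀ k i T, 0 ≤ x.p k i T) (hu : ∀ k i, 0 ≤ x.u k i)
    (hd : ∀ i j, x.d i j = 0) (n : ℕ) :
    FeasTraj t x n (zeroPlan t x) (fun _ => zeroCtrl N V) := by
  refine ⟨rfl, fun τ _ => ⟨?_, rfl⟩⟩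
  refine ⟨⟨fun _ _ _ => Or.inl rfl, fun _ _ _ => Or.inl rfl, fun _ _ => rfl, fun _ _ => rfl⟩,
    ?_, ?_⟩
  · intro k i
    have h1 := (zeroPlan_nonneg t x hp hu τ).1 k i 0
    have h2 := (zeroPlan_nonneg t x hp hu τ).2 k i
    simp [zeroCtrl]; omega
  · intro i j
    simp [zeroCtrl, zeroPlan_d t x τ i j, hd i j]

lemma zeroPlan_cost (t : N → N → ℕ) (ρ1 : ℝ) (thor : ℕ) (x : AMoDState N V)
    (hd : ∀ i j, x.d i j = 0) :
    planCost t ρ1 thor (zeroPlan t x) (fun _ => zeroCtrl N V) = 0 := by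
  unfold planCost
  apply Finset.sum_eq_zero
  intro τ _
  have hJx : Jx (zeroPlan t x (τ + 1)) = 0 := by
    unfold Jx
    apply Finset.sum_eq_zero; intro i _
    apply Finset.sum_eq_zero; intro j _
    rw [zeroPlan_d t x (τ + 1) i j, hd i j]
  have hJu : Ju t (zeroCtrl N V) = 0 := by
    unfold Ju
    apply Finset.sum_eq_zero; intro k _
    apply Finset.sum_eq_zero; intro i _
    apply Finset.sum_eq_zero; intro j _
    simp [zeroCtrl]
  simp [hJx, hJu]

/-- Along any feasible trajectory of the undisturbed system starting with no waiting
customers, the waiting-customer counts stay zero and all customer-carrying trips vanish. -/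
lemma feasTraj_d_zero (t : N → N → ℕ) (x : AMoDState N V) (n : ℕ)
    (ys : ℕ → AMoDState N V) (ds : ℕ → AMoDControl N V)
    (h : FeasTraj t x n ys ds) (hd : ∀ i j, x.d i j = 0) :
    ∀ τ ≤ n, ∀ i j, (ys τ).d i j = 0 := by
  intro τ
  induction τ with
  | zero => intro _ i j; rw [h.1]; exact hd i j
  | succ τ ih =>
    intro hτ i j
    have hτn : τ < n := by omega
    obtain ⟨hfc, hsucc⟩ := h.2 τ hτn
    have hdτ : ∀ i j, (ys τ).d i j = 0 := ih (by omega)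
    have hB := hfc.constrB i j
    rw [hdτ i j] at hB
    simp only [add_zero] at hB
    have hvnn : ∀ k ∈ (Finset.univ : Finset V), 0 ≤ (ds τ).v k i j := by
      intro k _
      rcases hfc.isControl.v_bin k i j with h' | h' <;> simp [h']
    have hsum : ∑ k : V, (ds τ).v k i j = 0 :=
      le_antisymm hB (Finset.sum_nonneg hvnn)
    rw [hsucc]
    simp [succState, hdτ i j, hsum]

lemma feasTraj_v_zero (t : N → N → ℕ) (x : AMoDState N V) (n : ℕ)
    (ys : ℕ → AMoDState N V) (ds : ℕ → AMoDControl N V)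
    (h : FeasTraj t x n ys ds) (hd : ∀ i j, x.d i j = 0) :
    ∀ τ < n, ∀ k i j, (ds τ).v k i j = 0 := by
  intro τ hτ k i j
  obtain ⟨hfc, _⟩ := h.2 τ hτ
  have hdτ := feasTraj_d_zero t x n ys ds h hd τ (by omega)
  have hB := hfc.constrB i j
  rw [hdτ i j] at hB
  simp only [add_zero] at hB
  have hvnn : ∀ k ∈ (Finset.univ : Finset V), 0 ≤ (ds τ).v k i j := by
    intro k _
    rcases hfc.isControl.v_bin k i j with h' | h' <;> simp [h']
  have hsum : ∑ k : V, (ds τ).v k i j = 0 :=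
    le_antisymm hB (Finset.sum_nonneg hvnn)
  have := (Finset.sum_eq_zero_iff_of_nonneg hvnn).1 hsum k (Finset.mem_univ k)
  exact this

lemma Ju_nonneg (t : N → N → ℕ) (uc : AMoDControl N V) (huc : IsControl uc) :
    0 ≤ Ju t uc := by
  apply Finset.sum_nonneg; intro k _
  apply Finset.sum_nonneg; intro i _
  apply Finset.sum_nonneg; intro j _
  rcases huc.w_bin k i j with h' | h' <;> simp [h']

lemma Ju_eq_zero_w (t : N → N → ℕ) (ht : ∀ i j : N, i ≠ j → 1 ≤ t i j)
    (uc : AMoDControl N V) (huc : IsControl uc) (hJu : Ju t uc = 0) :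
    ∀ k i j, uc.w k i j = 0 := by
  intro k i j
  by_cases hij : i = j
  · subst hij; exact huc.w_diag k i
  have hterm : ∀ k i j, 0 ≤ (t i j : ℤ) * uc.w k i j := by
    intro k i j
    rcases huc.w_bin k i j with h' | h' <;> simp [h']
  have h1 : (t i j : ℤ) * uc.w k i j ≤ ∑ j' : N, (t i j' : ℤ) * uc.w k i j' :=
    Finset.single_le_sum (fun j' _ => hterm k i j') (Finset.mem_univ j)
  have h2 : ∑ j' : N, (t i j' : ℤ) * uc.w k i j' ≤
      ∑ i' : N, ∑ j' : N, (t i' j' : ℤ) * uc.w k i' j' :=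
    Finset.single_le_sum
      (fun i' _ => Finset.sum_nonneg (fun j' _ => hterm k i' j')) (Finset.mem_univ i)
  have h3 : ∑ i' : N, ∑ j' : N, (t i' j' : ℤ) * uc.w k i' j' ≤ Ju t uc :=
    Finset.single_le_sum
      (fun k' _ => Finset.sum_nonneg (fun i' _ =>
        Finset.sum_nonneg (fun j' _ => hterm k' i' j'))) (Finset.mem_univ k)
  have hz : (t i j : ℤ) * uc.w k i j = 0 :=
    le_antisymm (by rw [← hJu]; exact h1.trans (h2.trans h3)) (hterm k i j)
  rcases mul_eq_zero.1 hz with h' | h'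
  · exfalso
    have := ht i j hij
    omega
  · exact h'

/-- Key lemma: at a nonnegative state with no waiting customers, every MPC-optimal
plan has identically zero controls. -/
lemma mpc_opt_zero (t : N → N → ℕ) (ht : ∀ i j : N, i ≠ j → 1 ≤ t i j)
    (thor : ℕ) (ρ1 : ℝ) (hρ1 : 0 < ρ1) (x : AMoDState N V)
    (hp : ∀ k i T, 0 ≤ x.p k i T) (hu : ∀ k i, 0 ≤ x.u k i)
    (hd : ∀ i j, x.d i j = 0)
    (xs : ℕ → AMoDState N V) (cs : ℕ → AMoDControl N V)
    (hopt : MPCOptimal t ρ1 thor x xs cs) :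
    ∀ τ < thor, ∀ (k : V) (i j : N), (cs τ).v k i j = 0 ∧ (cs τ).w k i j = 0 := by
  obtain ⟨hft, hmin⟩ := hopt
  -- cost of the MPC plan is ≤ 0 (cost of the zero plan)
  have hle : planCost t ρ1 thor xs cs ≤ 0 := by
    have := hmin (zeroPlan t x) (fun _ => zeroCtrl N V)
      (zeroPlan_feasTraj t x hp hu hd thor)
    rwa [zeroPlan_cost t ρ1 thor x hd] at this
  -- Jx vanishes along the plan
  have hJx : ∀ τ < thor, Jx (xs (τ + 1)) = 0 := by
    intro τ hτ
    unfold Jx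
    apply Finset.sum_eq_zero; intro i _
    apply Finset.sum_eq_zero; intro j _
    exact feasTraj_d_zero t x thor xs cs hft hd (τ + 1) (by omega) i j
  have hcost : planCost t ρ1 thor xs cs =
      ∑ τ ∈ Finset.range thor, ρ1 * (Ju t (cs τ) : ℝ) := by
    unfold planCost
    apply Finset.sum_congr rfl
    intro τ hτ
    rw [hJx τ (Finset.mem_range.1 hτ)]
    push_cast
    ring
  have hnn : ∀ τ ∈ Finset.range thor, 0 ≤ ρ1 * (Ju t (cs τ) : ℝ) := by
    intro τ hτ
    have hJunn := Ju_nonneg t (cs τ) (hft.2 τ (Finset.mem_range.1 hτ)).1.isControl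
    have : (0 : ℝ) ≤ (Ju t (cs τ) : ℝ) := by exact_mod_cast hJunn
    positivity
  have hsum0 : ∑ τ ∈ Finset.range thor, ρ1 * (Ju t (cs τ) : ℝ) = 0 :=
    le_antisymm (hcost ▸ hle) (Finset.sum_nonneg hnn)
  intro τ hτ k i j
  have hτm : τ ∈ Finset.range thor := Finset.mem_range.2 hτ
  have hterm0 := (Finset.sum_eq_zero_iff_of_nonneg hnn).1 hsum0 τ hτm
  have hJu0 : Ju t (cs τ) = 0 := by
    have : (Ju t (cs τ) : ℝ) = 0 := by
      rcases mul_eq_zero.1 hterm0 with h' | h'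
      · exact absurd h' (ne_of_gt hρ1)
      · exact h'
    exact_mod_cast this
  exact ⟨feasTraj_v_zero t x thor xs cs hft hd τ hτ k i j,
    Ju_eq_zero_w t ht (cs τ) (hft.2 τ hτ).1.isControl hJu0 k i j⟩

end Aux

/-- **Vanishing of controls after demand is cleared:** with `ρ₁ > 0`, at a feasible
state with no waiting customers every MPC-optimal plan has identically zero controls;
consequently, along any MPC trajectory, once all waiting-customer counts are zero they
remain zero forever and all subsequently applied controls are zero. -/

theorem controls_vanish_after_demand_cleared {N V : Type} [Fintype N] [DecidableEq N]
    [Fintype V] (t : N → N → ℕ) (hcard : 2 ≤ Fintype.card N)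
    (ht : ∀ i j : N, i ≠ j → 1 ≤ t i j)
    (thor : ℕ) (hthor : 1 ≤ thor) (ρ1 : ℝ) (hρ1 : 0 < ρ1) :
    (∀ x : AMoDState N V, FeasState t x → (∀ i j : N, x.d i j = 0) →
      ∀ (xs : ℕ → AMoDState N V) (cs : ℕ → AMoDControl N V),
        MPCOptimal t ρ1 thor x xs cs →
          ∀ τ < thor, ∀ (k : V) (i j : N), (cs τ).v k i j = 0 ∧ (cs τ).w k i j = 0) ∧
    (∀ (xs : ℕ → AMoDState N V) (cs : ℕ → AMoDControl N V),
      FeasState t (xs 0) → MPCTraj t ρ1 thor xs cs →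
        ∀ T0 : ℕ, (∀ i j : N, (xs T0).d i j = 0) →
          ∀ τ ≥ T0, (∀ i j : N, (xs τ).d i j = 0) ∧
            ∀ (k : V) (i j : N), (cs τ).v k i j = 0 ∧ (cs τ).w k i j = 0) := by
  have pNonneg : ∀ x : AMoDState N V, IsState t x → ∀ k i T, 0 ≤ x.p k i T := by
    intro x hx k i T
    by_cases hT : T ≤ Tmax t i
    · rcases hx.p_bin k i T hT with h' | h' <;> simp [h']
    · rw [hx.p_oob k i T (by omega)]
  have uNonneg : ∀ x : AMoDState N V, IsState t x → ∀ k i, 0 ≤ x.u k i := by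
    intro x hx k i
    rcases hx.u_bin k i with h' | h' <;> simp [h']
  constructor
  · intro x hfx hd xs cs hopt
    exact mpc_opt_zero t ht thor ρ1 hρ1 x (pNonneg x hfx.isState)
      (uNonneg x hfx.isState) hd xs cs hopt
  · intro xs cs hfs htraj T0 hdT0
    -- nonnegativity of p and u is preserved along the trajectory
    have hnn : ∀ τ, (∀ k i T, 0 ≤ (xs τ).p k i T) ∧ (∀ k i, 0 ≤ (xs τ).u k i) := by
      intro τ
      induction τ with
      | zero => exact ⟨pNonneg (xs 0) hfs.isState, uNonneg (xs 0) hfs.isState⟩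
      | succ τ ih =>
        obtain ⟨hfc, hsucc⟩ := htraj.1 τ
        have hvw : ∀ k i j, 0 ≤ (cs τ).v k i j + (cs τ).w k i j := by
          intro k i j
          rcases hfc.isControl.v_bin k i j with h1 | h1 <;>
            rcases hfc.isControl.w_bin k i j with h2 | h2 <;> simp [h1, h2]
        rw [hsucc]
        constructor
        · intro k i T
          simp only [succState]
          split
          · exact add_nonneg (ih.1 k i (T + 1))
              (Finset.sum_nonneg (fun j _ => hvw k j i))
          · split
            · exact Finset.sum_nonneg (fun j _ => hvw k j i)
            · exact le_refl 0
        · intro k i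
          simp only [succState]
          have hA := hfc.constrA k i
          linarith
    -- waiting customers remain zero, and controls vanish, from T0 on
    have hstep : ∀ τ, (∀ i j, (xs τ).d i j = 0) →
        (∀ (k : V) (i j : N), (cs τ).v k i j = 0 ∧ (cs τ).w k i j = 0) := by
      intro τ hdτ
      obtain ⟨ys, ds, hopt, hds0⟩ := htraj.2 τ
      have := mpc_opt_zero t ht thor ρ1 hρ1 (xs τ) (hnn τ).1 (hnn τ).2 hdτ ys ds hopt
        0 (by omega)
      rw [hds0] at this
      exact this
    have hP : ∀ τ, T0 ≤ τ → ∀ i j, (xs τ).d i j = 0 := by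
      intro τ hτ
      induction τ, hτ using Nat.le_induction with
      | base => exact hdT0
      | succ τ hτ ih =>
        intro i j
        obtain ⟨hfc, hsucc⟩ := htraj.1 τ
        have hv0 : ∀ k, (cs τ).v k i j = 0 := fun k => (hstep τ ih k i j).1
        rw [hsucc]
        simp [succState, ih i j, hv0]
    intro τ hτ
    exact ⟨hP τ hτ, hstep τ (hP τ hτ)⟩
end
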